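/- Under the core contextual dataset model, suppose for some ε > 0 the prompt q_1 satisfies P( ‖Xᵀφ(X·q_1) − (q★ + y·w★)‖ ≤ ε ) ≥ 1 − δ for a fresh sample (X, y), and the head w_2 satisfies w_2ᵀw★/‖w_2‖ > 4ε. Given a fresh dataset (X_i, y_i)_{i=1}^n, set the bias b = (1/n)Σ_i f_θ(X_i) with θ = (w_2, q_1) and the debiased classifier f'_θ(X) = f_θ(X) − b. If n ≥ 8·log(2/(δn)), then with probability at least 1 − 2δn over the fresh dataset, the test error of the debiased classifier satisfies err(f'_θ) ≤ δ. -/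

import Mathlib

/-!
On the event that every training feature is `ε`-close to its signal token `q★ + yᵢ w★`, the
head reads `f(Xᵢ) = ⟨q★, w₂⟩ + yᵢ ⟨w★, w₂⟩` up to `ε‖w₂‖`, so the bias `b` equals
`⟨q★, w₂⟩ + ȳ ⟨w★, w₂⟩` up to `ε‖w₂‖`, with `ȳ` the mean training label. Labels are Rademacher,
so Hoeffding gives `|ȳ| < 1/2` except with probability `2 exp (-n/8) ≤ δn`, and the union bound
over the features costs another `δn`. On that event a test sample with `ε`-close feature has
margin `y (f(X) - b) ≥ ⟨w★, w₂⟩ / 2 - 2ε‖w₂‖ > 0`, and the feature is far only with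
probability at most `δ`.
-/

open MeasureTheory ProbabilityTheory Finset Filter

noncomputable section

/-- `d`-dimensional Euclidean space. -/
abbrev E (d : ℕ) : Type := EuclideanSpace ℝ (Fin d)

/-- Real inner product. -/
def ip {d : ℕ} (x y : E d) : ℝ := inner ℝ x y

/-- Softmax over `Fin T`. -/
def softmax {T : ℕ} (v : Fin T → ℝ) : Fin T → ℝ :=
  fun t => Real.exp (v t) / ∑ s, Real.exp (v s)

/-- Prompt-attention model `f^att_{(w,q)}(X) = wᵀ Xᵀ φ(X q)`. -/
def promptAtt {T d : ℕ} (w q : E d) (X : Fin T → E d) : ℝ :=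
  ∑ t, softmax (fun s => ip (X s) q) t * ip (X t) w

/-- Tokens of the contextual data model: `x_t = q★ + y•w★` on the relevance set `R`,
and `x_t = -δq•q★ - δw·y•w★ + z_t` off it. -/
def tokens {T d : ℕ} (R : Finset (Fin T)) (qs ws : E d) (y δq δw : ℝ)
    (z : Fin T → E d) : Fin T → E d :=
  fun t => if t ∈ R then qs + y • ws else -(δq • qs) - (δw * y) • ws + z t

/-- Projection of `x` orthogonally to `a`:  `(I - āāᵀ) x`. -/
def projPerp {d : ℕ} (a x : E d) : E d := x - (ip a x / ‖a‖ ^ 2) • a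

/-- Attention feature map `Xᵀ φ(X q) = Σ_t φ(Xq)_t x_t`. -/
def attnFeature {T d : ℕ} (q : E d) (X : Fin T → E d) : E d :=
  ∑ t, softmax (fun s => ip (X s) q) t • X t

/-- Empirical square loss of the prompt-attention model on `n` samples. -/
def Lhat {T d n : ℕ} (yv : Fin n → ℝ) (X : Fin n → Fin T → E d) (w q : E d) : ℝ :=
  (1 / (2 * (n : ℝ))) * ∑ i, (yv i - promptAtt w q (X i)) ^ 2

/-- A family, indexed by `ι`, of i.i.d. samples from the core contextual dataset model
with label `y = ±1` uniform, relevance sets of size `ζT`, and i.i.d. centered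
`σ`-subGaussian noise tokens with symmetric law and zero third moment. -/
structure CoreSamples (T d : ℕ) (ζ σ : ℝ) (qs ws : E d)
    {Ω : Type} [MeasurableSpace Ω] (μ : Measure Ω) (ι : Type) where
  /-- labels -/
  yv : ι → Ω → ℝ
  /-- noise tokens -/
  z : ι → Fin T → Ω → E d
  /-- relevance sets -/
  Rset : ι → Finset (Fin T)
  hRcard : ∀ i, ((Rset i).card : ℝ) = ζ * T
  hy_meas : ∀ i, Measurable (yv i)
  hz_meas : ∀ i t, Measurable (z i t)
  hy_one : ∀ i, μ {ω | yv i ω = 1} = 1 / 2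
  hy_mone : ∀ i, μ {ω | yv i ω = -1} = 1 / 2
  indep : iIndepFun
    (fun i ω => (yv i ω, fun t => z i t ω)) μ
  hyz : ∀ i, IndepFun (yv i) (fun ω t => z i t ω) μ
  hz_indep : ∀ i, iIndepFun (fun t ω => z i t ω) μ
  hz_mean : ∀ i t, ∫ ω, z i t ω ∂μ = 0
  hz_subg : ∀ i t (v : E d) (s : ℝ),
    ∫ ω, Real.exp (s * ip (z i t ω) v) ∂μ ≤ Real.exp (σ ^ 2 * s ^ 2 * ‖v‖ ^ 2 / 2)
  hz_symm : ∀ i t, Measure.map (fun ω => z i t ω) μ = Measure.map (fun ω => -(z i t ω)) μ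
  hz_third : ∀ i t (a b c : E d),
    ∫ ω, ip (z i t ω) a * ip (z i t ω) b * ip (z i t ω) c ∂μ = 0
  hsample_id : ∀ i j, Measure.map (fun ω => (yv i ω, fun t => z i t ω)) μ
      = Measure.map (fun ω => (yv j ω, fun t => z j t ω)) μ
  hz_id : ∀ i t j s, Measure.map (z i t) μ = Measure.map (z j s) μ

/-- The token matrix of the `i`-th sample (core model: `δ = (0,0)`). -/
def sampleX {T d : ℕ} {ζ σ : ℝ} {qs ws : E d} {Ω : Type} [MeasurableSpace Ω]
    {μ : Measure Ω} {ι : Type} (M : CoreSamples T d ζ σ qs ws μ ι) (i : ι) (ω : Ω) :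
    Fin T → E d :=
  tokens (M.Rset i) qs ws (M.yv i ω) 0 0 fun t => M.z i t ω

/-- Negative empirical head-gradient `Ĝ_w(q, w) = -∇_w L̂(w, q)`. -/
def GwHat {T d n : ℕ} {ζ σ : ℝ} {qs ws : E d} {Ω : Type} [MeasurableSpace Ω]
    {μ : Measure Ω} (M : CoreSamples T d ζ σ qs ws μ (Fin n)) (q w : E d) (ω : Ω) :
    E d :=
  -gradient (fun w' => Lhat (fun i => M.yv i ω) (fun i => sampleX M i ω) w' q) w

/-- Negative empirical prompt-gradient `Ĝ_q(q, w) = -∇_q L̂(w, q)`. -/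
def GqHat {T d n : ℕ} {ζ σ : ℝ} {qs ws : E d} {Ω : Type} [MeasurableSpace Ω]
    {μ : Measure Ω} (M : CoreSamples T d ζ σ qs ws μ (Fin n)) (q w : E d) (ω : Ω) :
    E d :=
  -gradient (fun q' => Lhat (fun i => M.yv i ω) (fun i => sampleX M i ω) w q') q

open scoped NNReal ENNReal

section Rademacher

variable {Ω : Type*} [MeasurableSpace Ω] {μ : Measure Ω} [IsProbabilityMeasure μ] {y : Ω → ℝ}

lemma ae_eq_one_or_eq_neg_one_of_measure_eq_half (hy : Measurable y)
    (h1 : μ {ω | y ω = 1} = 1 / 2) (h2 : μ {ω | y ω = -1} = 1 / 2) :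
    ∀ᵐ ω ∂μ, y ω = 1 ∨ y ω = -1 := by
  have hdisj : Disjoint {ω | y ω = 1} {ω | y ω = -1} :=
    Set.disjoint_left.2 fun ω (h : y ω = 1) (h' : y ω = -1) => by norm_num [h] at h'
  have hA : MeasurableSet {ω | y ω = 1} := hy (measurableSet_singleton _)
  have hB : MeasurableSet {ω | y ω = -1} := hy (measurableSet_singleton _)
  refine (ae_mem_iff_measure_eq (hA.union hB).nullMeasurableSet).2 ?_
  rw [measure_union hdisj hB, h1, h2, ENNReal.add_halves, measure_univ]

lemma integral_eq_zero_of_measure_eq_half (hy : Measurable y)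
    (h1 : μ {ω | y ω = 1} = 1 / 2) (h2 : μ {ω | y ω = -1} = 1 / 2) :
    μ[y] = 0 := by
  have hA : MeasurableSet {ω | y ω = 1} := hy (measurableSet_singleton _)
  have hB : MeasurableSet {ω | y ω = -1} := hy (measurableSet_singleton _)
  have hy_eq : y =ᵐ[μ] {ω | y ω = 1}.indicator 1 - {ω | y ω = -1}.indicator 1 := by
    filter_upwards [ae_eq_one_or_eq_neg_one_of_measure_eq_half hy h1 h2] with ω hω
    rcases hω with hω | hω <;> norm_num [Set.indicator, hω]
  rw [integral_congr_ae hy_eq, integral_sub' ((integrable_const 1).indicator hA)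
    ((integrable_const 1).indicator hB), integral_indicator_one hA, integral_indicator_one hB,
    measureReal_def, measureReal_def, h1, h2, sub_self]

lemma hasSubgaussianMGF_one_of_measure_eq_half (hy : Measurable y)
    (h1 : μ {ω | y ω = 1} = 1 / 2) (h2 : μ {ω | y ω = -1} = 1 / 2) :
    HasSubgaussianMGF y 1 μ := by
  have hIcc : ∀ᵐ ω ∂μ, y ω ∈ Set.Icc (-1) 1 := by
    filter_upwards [ae_eq_one_or_eq_neg_one_of_measure_eq_half hy h1 h2] with ω hω
    rcases hω with hω | hω <;> norm_num [hω]
  convert hasSubgaussianMGF_of_mem_Icc_of_integral_eq_zero hy.aemeasurable hIcc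
    (integral_eq_zero_of_measure_eq_half hy h1 h2)
  norm_num

lemma measure_abs_sum_ge_le_of_iIndepFun {ι : Type*} {X : ι → Ω → ℝ}
    (h_indep : iIndepFun X μ) {c : ι → ℝ≥0} {s : Finset ι}
    (h_subG : ∀ i ∈ s, HasSubgaussianMGF (X i) (c i) μ) {ε : ℝ} (hε : 0 ≤ ε) :
    μ.real {ω | ε ≤ |∑ i ∈ s, X i ω|} ≤ 2 * Real.exp (-ε ^ 2 / (2 * ∑ i ∈ s, c i)) := by
  have h_indep_neg : iIndepFun (fun i ω => -X i ω) μ :=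
    h_indep.comp (fun _ => Neg.neg) fun _ => measurable_neg
  calc μ.real {ω | ε ≤ |∑ i ∈ s, X i ω|}
      ≤ μ.real ({ω | ε ≤ ∑ i ∈ s, X i ω} ∪ {ω | ε ≤ ∑ i ∈ s, -X i ω}) := by
        refine measureReal_mono fun ω (hω : ε ≤ |∑ i ∈ s, X i ω|) => ?_
        simpa only [Set.mem_union, Set.mem_ofPred_eq, sum_neg_distrib] using le_abs.1 hω
    _ ≤ μ.real {ω | ε ≤ ∑ i ∈ s, X i ω} + μ.real {ω | ε ≤ ∑ i ∈ s, -X i ω} :=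
        measureReal_union_le _ _
    _ ≤ Real.exp (-ε ^ 2 / (2 * ∑ i ∈ s, c i)) + Real.exp (-ε ^ 2 / (2 * ∑ i ∈ s, c i)) :=
        add_le_add (HasSubgaussianMGF.measure_sum_ge_le_of_iIndepFun h_indep h_subG hε)
          (HasSubgaussianMGF.measure_sum_ge_le_of_iIndepFun h_indep_neg
            (fun i hi => (h_subG i hi).neg) hε)
    _ = 2 * Real.exp (-ε ^ 2 / (2 * ∑ i ∈ s, c i)) := by ring

lemma measure_abs_sum_ge_half_card_le_of_measure_eq_half {ι : Type*} {Y : ι → Ω → ℝ}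
    (h_indep : iIndepFun Y μ) (hY : ∀ i, Measurable (Y i))
    (h1 : ∀ i, μ {ω | Y i ω = 1} = 1 / 2) (h2 : ∀ i, μ {ω | Y i ω = -1} = 1 / 2)
    (s : Finset ι) :
    μ {ω | (#s : ℝ) / 2 ≤ |∑ i ∈ s, Y i ω|} ≤ ENNReal.ofReal (2 * Real.exp (-#s / 8)) := by
  have h := measure_abs_sum_ge_le_of_iIndepFun h_indep (s := s)
    (fun i _ => hasSubgaussianMGF_one_of_measure_eq_half (hY i) (h1 i) (h2 i))
    (ε := #s / 2) (by positivity)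
  rw [← ofReal_measureReal]
  refine ENNReal.ofReal_le_ofReal (h.trans_eq ?_)
  rcases (#s).eq_zero_or_pos with hs | hs
  · simp [hs]
  · congr 2
    rw [sum_const, nsmul_one, NNReal.coe_natCast]
    field_simp
    ring

end Rademacher

section Probability

variable {Ω : Type*} [MeasurableSpace Ω] {μ : Measure Ω} [IsProbabilityMeasure μ] {A : Set Ω}

lemma measure_compl_le_of_ofReal_one_sub_le (hA : MeasurableSet A) {δ : ℝ}
    (h : ENNReal.ofReal (1 - δ) ≤ μ A) : μ Aᶜ ≤ ENNReal.ofReal δ := by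
  rw [prob_compl_eq_one_sub hA, tsub_le_iff_right]
  calc (1 : ℝ≥0∞) = ENNReal.ofReal (δ + (1 - δ)) := by simp
    _ ≤ ENNReal.ofReal δ + ENNReal.ofReal (1 - δ) := ENNReal.ofReal_add_le
    _ ≤ ENNReal.ofReal δ + μ A := by gcongr

lemma ofReal_one_sub_le_of_measure_compl_le {x : ℝ} (hx : 0 ≤ x)
    (h : μ Aᶜ ≤ ENNReal.ofReal x) : ENNReal.ofReal (1 - x) ≤ μ A := by
  rw [ENNReal.ofReal_sub _ hx, ENNReal.ofReal_one, tsub_le_iff_right]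
  calc (1 : ℝ≥0∞) = μ (A ∪ Aᶜ) := by simp
    _ ≤ μ A + μ Aᶜ := measure_union_le _ _
    _ ≤ μ A + ENNReal.ofReal x := by gcongr

end Probability

lemma measure_iUnion_le_ofReal_card_mul {Ω κ : Type*} [MeasurableSpace Ω] {μ : Measure Ω}
    [Fintype κ] {A : κ → Set Ω} {δ : ℝ} (h : ∀ i, μ (A i) ≤ ENNReal.ofReal δ) :
    μ (⋃ i, A i) ≤ ENNReal.ofReal (Fintype.card κ * δ) := by
  calc μ (⋃ i, A i) ≤ ∑ i, μ (A i) := measure_iUnion_fintype_le μ A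
    _ ≤ ∑ _i : κ, ENNReal.ofReal δ := sum_le_sum fun i _ => h i
    _ = ENNReal.ofReal (Fintype.card κ * δ) := by
      rw [sum_const, card_univ, nsmul_eq_mul, ENNReal.ofReal_mul (Nat.cast_nonneg _),
        ENNReal.ofReal_natCast]

lemma two_mul_exp_neg_div_eight_le {x m : ℝ} (hx : 0 < x) (h : 8 * Real.log (2 / x) ≤ m) :
    2 * Real.exp (-m / 8) ≤ x := by
  have h' : 2 / x ≤ Real.exp (m / 8) :=
    (Real.log_le_iff_le_exp (by positivity)).1 (by linarith)
  rw [neg_div, Real.exp_neg, ← div_eq_mul_inv, div_le_iff₀ (Real.exp_pos _)]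
  rwa [div_le_iff₀ hx, mul_comm] at h'

lemma abs_mean_sub_le {n : ℕ} (hn : 0 < n) {F Y : Fin n → ℝ} {a c η : ℝ}
    (h : ∀ i, |F i - (a + Y i * c)| ≤ η) :
    |1 / (n : ℝ) * ∑ i, F i - (a + 1 / (n : ℝ) * (∑ i, Y i) * c)| ≤ η := by
  have hn' : (0 : ℝ) < n := by exact_mod_cast hn
  have hmean : 1 / (n : ℝ) * ∑ i, F i - (a + 1 / (n : ℝ) * (∑ i, Y i) * c)
      = 1 / (n : ℝ) * ∑ i, (F i - (a + Y i * c)) := by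
    simp only [sum_sub_distrib, sum_add_distrib, sum_const, card_univ, Fintype.card_fin,
      nsmul_eq_mul, ← sum_mul]
    field_simp
  rw [hmean, abs_mul, abs_of_pos (by positivity)]
  calc 1 / (n : ℝ) * |∑ i, (F i - (a + Y i * c))|
      ≤ 1 / (n : ℝ) * ∑ _i : Fin n, η := by
        gcongr
        exact (abs_sum_le_sum_abs _ _).trans (sum_le_sum fun i _ => h i)
    _ = η := by simp [field]

lemma mul_sub_pos_of_abs_sub_le {a c η m y f b : ℝ} (hc : 4 * η < c) (hm : |m| ≤ 1 / 2)
    (hy : y = 1 ∨ y = -1) (hf : |f - (a + y * c)| ≤ η) (hb : |b - (a + m * c)| ≤ η) :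
    0 < y * (f - b) := by
  have hc0 : 0 < c := by linarith [(abs_nonneg _).trans hf]
  have hmc : |m * c| ≤ c / 2 := by
    rw [abs_mul, abs_of_pos hc0]; nlinarith
  rw [abs_le] at hf hb hmc
  rcases hy with rfl | rfl <;> linarith

lemma continuous_softmax {T : ℕ} : Continuous (softmax (T := T)) := by
  refine continuous_pi fun t => Continuous.div (by fun_prop) (by fun_prop) fun v => ?_
  exact (sum_pos (fun s _ => Real.exp_pos _) ⟨t, mem_univ t⟩).ne'

lemma continuous_attnFeature {T d : ℕ} (q : E d) :
    Continuous (attnFeature (T := T) q) := by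
  have hlogits : Continuous fun X : Fin T → E d => fun s => ip (X s) q :=
    continuous_pi fun s => (continuous_apply s).inner continuous_const
  exact continuous_finsetSum _ fun t _ =>
    ((continuous_apply t).comp (continuous_softmax.comp hlogits)).smul (continuous_apply t)

lemma promptAtt_eq_ip {T d : ℕ} (w q : E d) (X : Fin T → E d) :
    promptAtt w q X = ip (attnFeature q X) w := by
  simp only [promptAtt, attnFeature, ip, sum_inner, real_inner_smul_left]

lemma continuous_promptAtt {T d : ℕ} (w q : E d) : Continuous (promptAtt (T := T) w q) := by
  simp only [funext (promptAtt_eq_ip w q)]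
  exact (continuous_attnFeature q).inner continuous_const

lemma continuous_tokens {T d : ℕ} (R : Finset (Fin T)) (qs ws : E d) (δq δw : ℝ) :
    Continuous fun p : ℝ × (Fin T → E d) => tokens R qs ws p.1 δq δw p.2 := by
  refine continuous_pi fun t => ?_
  by_cases ht : t ∈ R <;> simp only [tokens, ht, if_true, if_false] <;> fun_prop

lemma abs_promptAtt_sub_le_of_norm_attnFeature_sub_le {T d : ℕ} {q w qs ws : E d}
    {X : Fin T → E d} {y ε : ℝ} (h : ‖attnFeature q X - (qs + y • ws)‖ ≤ ε) :
    |promptAtt w q X - (ip qs w + y * ip ws w)| ≤ ε * ‖w‖ := by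
  have hlin : promptAtt w q X - (ip qs w + y * ip ws w)
      = ip (attnFeature q X - (qs + y • ws)) w := by
    simp only [promptAtt_eq_ip, ip, inner_sub_left, inner_add_left, real_inner_smul_left]
  rw [hlin]
  exact (abs_real_inner_le_norm _ _).trans (mul_le_mul_of_nonneg_right h (norm_nonneg w))

namespace CoreSamples

variable {T d : ℕ} {ζ σ : ℝ} {qs ws : E d} {Ω : Type} [MeasurableSpace Ω] {μ : Measure Ω}

section

variable {ι : Type} (M : CoreSamples T d ζ σ qs ws μ ι)

def featureNearSignal (q : E d) (ε : ℝ) (i : ι) : Set Ω :=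
  {ω | ‖attnFeature q (sampleX M i ω) - (qs + M.yv i ω • ws)‖ ≤ ε}

lemma measurable_sample (i : ι) : Measurable fun ω => (M.yv i ω, fun t => M.z i t ω) :=
  (M.hy_meas i).prodMk (measurable_pi_lambda _ (M.hz_meas i))

lemma measurable_sampleX (i : ι) : Measurable (sampleX M i) :=
  ((continuous_tokens (M.Rset i) qs ws 0 0).measurable.comp (M.measurable_sample i) :)

lemma measurableSet_featureNearSignal (q : E d) (ε : ℝ) (i : ι) :
    MeasurableSet (M.featureNearSignal q ε i) :=
  measurableSet_le (((continuous_attnFeature q).measurable.comp (M.measurable_sampleX i)).sub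
    (measurable_const.add ((M.hy_meas i).smul_const ws))).norm measurable_const

lemma iIndepFun_yv : iIndepFun M.yv μ :=
  M.indep.comp (fun _ => Prod.fst) fun _ => measurable_fst

lemma testError_le [IsProbabilityMeasure μ] (i : ι) {q w : E d} {ε δ : ℝ}
    (hfeat : ENNReal.ofReal (1 - δ) ≤ μ (M.featureNearSignal q ε i))
    (hc : 4 * (ε * ‖w‖) < ip ws w) {b m : ℝ} (hm : |m| ≤ 1 / 2)
    (hb : |b - (ip qs w + m * ip ws w)| ≤ ε * ‖w‖) :
    (μ.map fun ω => (M.yv i ω, fun t => M.z i t ω))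
        {s : ℝ × (Fin T → E d) |
          s.1 * (promptAtt w q (tokens (M.Rset i) qs ws s.1 0 0 s.2) - b) < 0}
      ≤ ENNReal.ofReal δ := by
  have hmeas : MeasurableSet {s : ℝ × (Fin T → E d) |
      s.1 * (promptAtt w q (tokens (M.Rset i) qs ws s.1 0 0 s.2) - b) < 0} :=
    measurableSet_lt (continuous_fst.mul (((continuous_promptAtt w q).comp
      (continuous_tokens (M.Rset i) qs ws 0 0)).sub continuous_const)).measurable
      measurable_const
  rw [Measure.map_apply (M.measurable_sample i) hmeas]
  refine (measure_mono_ae ?_).trans (measure_compl_le_of_ofReal_one_sub_le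
    (M.measurableSet_featureNearSignal q ε i) hfeat)
  filter_upwards [ae_eq_one_or_eq_neg_one_of_measure_eq_half (M.hy_meas i) (M.hy_one i)
    (M.hy_mone i)] with ω hy hmisclassified hnear
  exact lt_asymm hmisclassified (mul_sub_pos_of_abs_sub_le hc hm hy
    (abs_promptAtt_sub_le_of_norm_attnFeature_sub_le hnear) hb)

end

section

variable {n : ℕ} (M : CoreSamples T d ζ σ qs ws μ (Option (Fin n)))

def goodTrainingEvent (q : E d) (ε : ℝ) : Set Ω :=
  (⋂ i : Fin n, M.featureNearSignal q ε (some i)) ∩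
    {ω | |∑ i : Fin n, M.yv (some i) ω| < (n : ℝ) / 2}

lemma ofReal_one_sub_le_measure_goodTrainingEvent [IsProbabilityMeasure μ] (hn : 0 < n)
    {q : E d} {ε δ : ℝ} (hδ : 0 < δ)
    (hfeat : ∀ i, ENNReal.ofReal (1 - δ) ≤ μ (M.featureNearSignal q ε i))
    (hbign : 8 * Real.log (2 / (δ * n)) ≤ n) :
    ENNReal.ofReal (1 - 2 * δ * n) ≤ μ (M.goodTrainingEvent q ε) := by
  have hfeatures : μ (⋃ i : Fin n, (M.featureNearSignal q ε (some i))ᶜ)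
      ≤ ENNReal.ofReal (n * δ) := by
    simpa using measure_iUnion_le_ofReal_card_mul fun i : Fin n =>
      measure_compl_le_of_ofReal_one_sub_le (M.measurableSet_featureNearSignal q ε (some i))
        (hfeat (some i))
  have hlabels : μ {ω | (n : ℝ) / 2 ≤ |∑ i : Fin n, M.yv (some i) ω|}
      ≤ ENNReal.ofReal (n * δ) := by
    have h := measure_abs_sum_ge_half_card_le_of_measure_eq_half M.iIndepFun_yv M.hy_meas
      M.hy_one M.hy_mone (univ.map Function.Embedding.some)
    simp only [card_map, card_univ, Fintype.card_fin, sum_map, Function.Embedding.some_apply] at h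
    refine h.trans (ENNReal.ofReal_le_ofReal ?_)
    linarith [two_mul_exp_neg_div_eight_le (by positivity) hbign]
  refine ofReal_one_sub_le_of_measure_compl_le (by positivity) ?_
  rw [goodTrainingEvent, Set.compl_inter, Set.compl_iInter, Set.compl_ofPred]
  simp only [not_lt]
  calc _ ≤ μ (⋃ i : Fin n, (M.featureNearSignal q ε (some i))ᶜ)
        + μ {ω | (n : ℝ) / 2 ≤ |∑ i : Fin n, M.yv (some i) ω|} := measure_union_le _ _
    _ ≤ ENNReal.ofReal (n * δ) + ENNReal.ofReal (n * δ) := add_le_add hfeatures hlabels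
    _ = ENNReal.ofReal (2 * δ * n) := by
      rw [← ENNReal.ofReal_add (by positivity) (by positivity)]
      ring_nf

end

end CoreSamples

theorem debiasing_predictions_general
    {T d n : ℕ} (hn : 0 < n)
    (ζ σ : ℝ)
    (qs ws : E d)
    {Ω : Type} [MeasurableSpace Ω] (μ : Measure Ω) [IsProbabilityMeasure μ]
    -- `n` fresh samples indexed by `some i`, plus an independent test sample `none`
    (M : CoreSamples T d ζ σ qs ws μ (Option (Fin n)))
    (ε δ : ℝ) (hε : 0 < ε) (hδ : 0 < δ)
    (q₁ w₂ : E d)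
    (hfeat : ∀ i, ENNReal.ofReal (1 - δ) ≤
      μ {ω | ‖attnFeature q₁ (sampleX M i ω) - (qs + M.yv i ω • ws)‖ ≤ ε})
    (hcorr : 4 * ε < ip ws w₂ / ‖w₂‖)
    (hbign : 8 * Real.log (2 / (δ * n)) ≤ n) :
    ENNReal.ofReal (1 - 2 * δ * n) ≤
      μ {ω |
        -- the debiased classifier `f'_θ = f_θ - b` has test error at most `δ`
        (μ.map fun ω' => (M.yv none ω', fun t => M.z none t ω'))
            {s : ℝ × (Fin T → E d) |
              s.1 * (promptAtt w₂ q₁ (tokens (M.Rset none) qs ws s.1 0 0 s.2)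
                - (1 / (n : ℝ)) * ∑ i : Fin n, promptAtt w₂ q₁ (sampleX M (some i) ω))
                < 0}
          ≤ ENNReal.ofReal δ} := by
  have hw₂ : 0 < ‖w₂‖ := (norm_nonneg w₂).lt_of_ne' fun h => by
    rw [h, div_zero] at hcorr
    linarith
  have hc : 4 * (ε * ‖w₂‖) < ip ws w₂ := by
    rw [← mul_assoc]
    exact (lt_div_iff₀ hw₂).1 hcorr
  refine (M.ofReal_one_sub_le_measure_goodTrainingEvent hn hδ hfeat hbign).trans
    (measure_mono fun ω ⟨hnear, hbalanced⟩ => ?_)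
  have hmean : |1 / (n : ℝ) * ∑ i : Fin n, M.yv (some i) ω| ≤ 1 / 2 := by
    rw [abs_mul, abs_of_pos (by positivity), one_div_mul_eq_div, div_le_iff₀ (by positivity)]
    linarith [hbalanced.out]
  exact M.testError_le none (hfeat none) hc hmean
    (abs_mean_sub_le hn fun i => abs_promptAtt_sub_le_of_norm_attnFeature_sub_le
      (Set.mem_iInter.1 hnear i))

/-- Lemma: debiasing predictions.  If the prompt `q₁` yields attention
features `ε`-close to the signal token with probability `1 - δ`, and the head `w₂`
satisfies `w₂ᵀw★/‖w₂‖ > 4ε`, then subtracting the empirical bias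
`b = (1/n)Σᵢ f_θ(Xᵢ)` computed on a fresh dataset yields, with probability `1 - 2δn`
over that dataset, a classifier with test error at most `δ`. -/
theorem debiasing_predictions
    {T d n : ℕ} (hT : 0 < T) (hn : 0 < n)
    (ζ σ : ℝ) (hζ0 : 0 < ζ) (hζ1 : ζ < 1) (hσ : 0 < σ)
    (qs ws : E d)
    {Ω : Type} [MeasurableSpace Ω] (μ : Measure Ω) [IsProbabilityMeasure μ]
    -- `n` fresh samples indexed by `some i`, plus an independent test sample `none`
    (M : CoreSamples T d ζ σ qs ws μ (Option (Fin n)))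
    (ε δ : ℝ) (hε : 0 < ε) (hδ : 0 < δ)
    (q₁ w₂ : E d)
    (hfeat : ∀ i, ENNReal.ofReal (1 - δ) ≤
      μ {ω | ‖attnFeature q₁ (sampleX M i ω) - (qs + M.yv i ω • ws)‖ ≤ ε})
    (hcorr : 4 * ε < ip ws w₂ / ‖w₂‖)
    (hbign : 8 * Real.log (2 / (δ * n)) ≤ n) :
    ENNReal.ofReal (1 - 2 * δ * n) ≤
      μ {ω |
        -- the debiased classifier `f'_θ = f_θ - b` has test error at most `δ`
        (μ.map fun ω' => (M.yv none ω', fun t => M.z none t ω'))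
            {s : ℝ × (Fin T → E d) |
              s.1 * (promptAtt w₂ q₁ (tokens (M.Rset none) qs ws s.1 0 0 s.2)
                - (1 / (n : ℝ)) * ∑ i : Fin n, promptAtt w₂ q₁ (sampleX M (some i) ω))
                < 0}
          ≤ ENNReal.ofReal δ} :=
  debiasing_predictions_general hn ζ σ qs ws μ M ε δ hε hδ q₁ w₂ hfeat hcorr hbign
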